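/- For every graph G, the maximum degree of the true-twin quotient graph G̃ satisfies Δ(G̃) ≤ α_loc(G)^{ω̃(G)}, where α_loc(G) is the local independence number and ω̃(G) = ω(G̃) is the clique-incidence-diversity. -/

import Mathlib

variable {V : Type} {W : Type}

/-- Two vertices are true twins: they have the same closed neighbourhood. -/
def twin (G : SimpleGraph V) (x y : V) : Prop :=
  ∀ z, (G.Adj x z ∨ x = z) ↔ (G.Adj y z ∨ y = z)

/-- The true-twin relation as a setoid. -/
def twinSetoid (G : SimpleGraph V) : Setoid V :=
  ⟨twin G, ⟨fun _ _ => Iff.rfl, fun h z => (h z).symm, fun h1 h2 z => (h1 z).trans (h2 z)⟩⟩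

/-- The quotient of `G` by the true-twin relation. -/
def quotGraph (G : SimpleGraph V) : SimpleGraph (Quotient (twinSetoid G)) where
  Adj a b := a ≠ b ∧ ∃ x y, Quotient.mk (twinSetoid G) x = a ∧
    Quotient.mk (twinSetoid G) y = b ∧ G.Adj x y
  symm := by
    constructor
    rintro a b ⟨h, x, y, hx, hy, hxy⟩
    exact ⟨h.symm, y, x, hy, hx, hxy.symm⟩
  loopless := by constructor; rintro a ⟨h, _⟩; exact h rfl

/-- The true-twin class of a vertex. -/
def qmk (G : SimpleGraph V) (v : V) : Quotient (twinSetoid G) :=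
  Quotient.mk (twinSetoid G) v

/-- `K` is a maximal clique of `G`. -/
def MaxClique (G : SimpleGraph V) (K : Set V) : Prop :=
  G.IsClique K ∧ ∀ K', G.IsClique K' → K ⊆ K' → K' = K

/-- `S` is an independent set of `G`. -/
def IndepSet (G : SimpleGraph V) (S : Set V) : Prop :=
  ∀ x ∈ S, ∀ y ∈ S, ¬ G.Adj x y

/-- Independence number. -/
noncomputable def indepNum (G : SimpleGraph V) : ℕ :=
  sSup {n | ∃ S : Set V, IndepSet G S ∧ S.ncard = n}

/-- Clique cover number: minimum number of cliques covering all vertices. -/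
noncomputable def cliqueCoverNum (G : SimpleGraph V) : ℕ :=
  sInf {n | ∃ f : Fin n → Set V, (∀ i, G.IsClique (f i)) ∧ ∀ v, ∃ i, v ∈ f i}

/-- Closed neighbourhood. -/
def cNbhd (G : SimpleGraph V) (v : V) : Set V := insert v (G.neighborSet v)

/-- Local independence number. -/
noncomputable def alphaLoc (G : SimpleGraph V) : ℕ :=
  sSup {n | ∃ v, ∃ S ⊆ cNbhd G v, IndepSet G S ∧ S.ncard = n}

/-- Local clique cover number. -/
noncomputable def thetaLoc (G : SimpleGraph V) : ℕ :=
  sSup {n | ∃ v, cliqueCoverNum (G.induce (cNbhd G v)) = n}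

/-- Clique-incidence-degree: max number of maximal cliques containing a vertex. -/
noncomputable def cideg (G : SimpleGraph V) : ℕ :=
  sSup {n | ∃ v, {K | MaxClique G K ∧ v ∈ K}.ncard = n}

/-- Clique-incidence-diversity: max number of true-twin classes meeting a maximal clique. -/
noncomputable def cliqueIncDiv (G : SimpleGraph V) : ℕ :=
  sSup {n | ∃ K, MaxClique G K ∧ (qmk G '' K).ncard = n}

/-- Clique-degree: max number of other maximal cliques intersecting a maximal clique. -/
noncomputable def cdeg (G : SimpleGraph V) : ℕ :=
  sSup {n | ∃ K, MaxClique G K ∧ {K' | MaxClique G K' ∧ K' ≠ K ∧ (K' ∩ K).Nonempty}.ncard = n}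

/-- Maximum degree. -/
noncomputable def maxDeg (H : SimpleGraph W) : ℕ :=
  sSup {n | ∃ v, (H.neighborSet v).ncard = n}

/-- Clique number. -/
noncomputable def cliqueNum (H : SimpleGraph W) : ℕ :=
  sSup {n | ∃ K : Set W, H.IsClique K ∧ K.ncard = n}

/-- A separation of a graph. -/
def IsSep (H : SimpleGraph W) (A B : Set W) : Prop :=
  A ∪ B = Set.univ ∧ ∀ a ∈ A \ B, ∀ b ∈ B \ A, ¬ H.Adj a b

/-- A tree-decomposition. -/
structure TreeDec {ι : Type} (G : SimpleGraph V) (T : SimpleGraph ι) (β : ι → Set V) : Prop where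
  tree : T.IsTree
  cover : ∀ v, ∃ t, v ∈ β t
  edges : ∀ v w, G.Adj v w → ∃ t, v ∈ β t ∧ w ∈ β t
  subtree : ∀ v, (T.induce {t | v ∈ β t}).Connected

/-- α-treewidth (tree-independence number). -/
noncomputable def alphaTW (G : SimpleGraph V) : ℕ :=
  sInf {n | ∃ (ι : Type) (T : SimpleGraph ι) (β : ι → Set V), TreeDec G T β ∧
    ∀ t, ∀ S ⊆ β t, IndepSet G S → S.ncard ≤ n}

/-- Neighbourhood of a set of vertices (outside the set). -/
def setNbhd (G : SimpleGraph V) (K : Set V) : Set V :=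
  {v | v ∉ K ∧ ∃ x ∈ K, G.Adj v x}

/-- Diversity number of a set `K`: max size of a `K`-diverse set of neighbours. -/
noncomputable def dn (G : SimpleGraph V) (K : Set V) : ℕ :=
  sSup {n | ∃ Y ⊆ setNbhd G K,
    (∀ y1 ∈ Y, ∀ y2 ∈ Y, y1 ≠ y2 → G.neighborSet y1 ∩ K ≠ G.neighborSet y2 ∩ K) ∧ Y.ncard = n}

/-- Cutrank of a set of vertices: F₂-rank of the corresponding submatrix
of the adjacency matrix. -/
noncomputable def cutrank (G : SimpleGraph V) [Fintype V] (X : Set V) : ℕ :=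
  haveI : DecidableRel G.Adj := Classical.decRel _
  haveI : Fintype ↥X := Fintype.ofFinite _
  haveI : Fintype ↥(Xᶜ) := Fintype.ofFinite _
  (Matrix.of fun (x : ↥X) (y : ↥(Xᶜ)) => if G.Adj x.1 y.1 then (1 : ZMod 2) else 0).rank

/-- `G` admits a rank-decomposition of width at most `w`: a tree whose internal
nodes have degree 3, whose leaves are in bijection with `V(G)`, such that every
edge induces a bipartition of the vertices of cutrank at most `w`. -/
def HasRankDecompOfWidth (G : SimpleGraph V) [Fintype V] (w : ℕ) : Prop :=
  ∃ (ι : Type) (T : SimpleGraph ι) (δ : V → ι),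
    T.IsTree ∧ Function.Injective δ ∧
    (∀ t, (T.neighborSet t).ncard = 1 ↔ ∃ v, δ v = t) ∧
    (∀ t, (T.neighborSet t).ncard = 1 ∨ (T.neighborSet t).ncard = 3) ∧
    ∀ a b, T.Adj a b → cutrank G {v | (T.deleteEdges {s(a,b)}).Reachable (δ v) a} ≤ w

/-- An injective enumeration of a path that is induced in `G`. -/
def IsInducedPath (G : SimpleGraph V) {ℓ : ℕ} (x : Fin ℓ → V) : Prop :=
  Function.Injective x ∧ ∀ i j, G.Adj (x i) (x j) ↔ (i.val + 1 = j.val ∨ j.val + 1 = i.val)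

/-!
Choosing representatives lifts the neighbourhood `N(c)` of a twin class `c` in `G̃` into the
closed neighbourhood of a representative of `c`. Hence an independent set of `G̃` inside `N(c)`
has at most `α = α_loc(G)` elements, and a clique `C` of `G̃` inside `N(c)` extends, together
with `c`, to a maximal clique of `G` meeting `|C| + 1` classes, so `|C| ≤ ω̃(G) - 1`. The
Erdős–Szekeres bound for Ramsey numbers gives `|N(c)| < (α + ω̃ - 1).choose α ≤ α ^ ω̃` when
`α ≥ 2`. If `α ≤ 1`, then `G̃` has no edges at all: two adjacent vertices that are not twins are
distinguished by a third vertex, which yields an independent pair in a closed neighbourhood.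
-/

section Ramsey

variable {H : SimpleGraph W}

lemma indepSet_singleton (x : W) : IndepSet H {x} := by
  rintro a rfl b rfl
  exact H.irrefl

lemma IndepSet.insert {s : Set W} {x : W} (hs : IndepSet H s) (hx : ∀ y ∈ s, ¬ H.Adj x y) :
    IndepSet H (insert x s) := by
  rintro a (rfl | ha) b (rfl | hb)
  · exact H.irrefl
  · exact hx b hb
  · exact fun h => hx a ha h.symm
  · exact hs a ha b hb

lemma eq_empty_of_forall_indepSet_ncard_le_zero {s : Set W}
    (hind : ∀ t ⊆ s, IndepSet H t → t.ncard ≤ 0) : s = ∅ :=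
  Set.eq_empty_of_forall_notMem fun x hx => by
    simpa using hind {x} (Set.singleton_subset_iff.2 hx) (indepSet_singleton x)

lemma eq_empty_of_forall_isClique_ncard_le_zero {s : Set W}
    (hclq : ∀ t ⊆ s, H.IsClique t → t.ncard ≤ 0) : s = ∅ :=
  Set.eq_empty_of_forall_notMem fun x hx => by
    simpa using hclq {x} (Set.singleton_subset_iff.2 hx) (H.isClique_singleton x)

theorem ncard_add_one_le_choose_of_indepSet_of_isClique {p q : ℕ} {s : Set W}
    (hs : s.Finite) (hind : ∀ t ⊆ s, IndepSet H t → t.ncard ≤ p)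
    (hclq : ∀ t ⊆ s, H.IsClique t → t.ncard ≤ q) :
    s.ncard + 1 ≤ (p + q).choose p := by
  induction p generalizing q s with
  | zero => simp [eq_empty_of_forall_indepSet_ncard_le_zero hind]
  | succ p ihp =>
    induction q generalizing s with
    | zero => simp [eq_empty_of_forall_isClique_ncard_le_zero hclq]
    | succ q ihq =>
      rcases s.eq_empty_or_nonempty with rfl | ⟨x, hx⟩
      · rw [Set.ncard_empty]
        exact Nat.choose_pos (by omega)
      -- Cliques in the neighbours `A` of `x` and independent sets in the non-neighbours `B`
      -- extend by `x`; Pascal's rule matches this split.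
      set A := (s \ {x}) ∩ H.neighborSet x
      set B := (s \ {x}) \ H.neighborSet x
      have hsplit : s.ncard = A.ncard + B.ncard + 1 := by
        rw [Set.ncard_inter_add_ncard_sdiff_eq_ncard _ _ (hs.subset Set.sdiff_subset),
          Set.ncard_sdiff_singleton_add_one hx hs]
      have hinsert {t : Set W} (ht : t ⊆ s \ {x}) : (insert x t).ncard = t.ncard + 1 :=
        Set.ncard_insert_of_notMem (fun hxt => (ht hxt).2 rfl)
          (hs.subset (ht.trans Set.sdiff_subset))
      have hA : A.ncard + 1 ≤ (p + 1 + q).choose (p + 1) := by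
        refine ihq (hs.subset fun y hy => hy.1.1) (fun t ht => hind t fun y hy => (ht hy).1.1) ?_
        intro t ht htC
        have := hclq (insert x t) (Set.insert_subset hx fun y hy => (ht hy).1.1)
          (htC.insert fun y hy _ => (ht hy).2)
        rw [hinsert fun y hy => (ht hy).1] at this
        omega
      have hB : B.ncard + 1 ≤ (p + (q + 1)).choose p := by
        refine ihp (hs.subset fun y hy => hy.1.1) ?_ (fun t ht => hclq t fun y hy => (ht hy).1.1)
        intro t ht htI
        have := hind (insert x t) (Set.insert_subset hx fun y hy => (ht hy).1.1)
          (htI.insert fun y hy => (ht hy).2)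
        rw [hinsert fun y hy => (ht hy).1] at this
        omega
      have hpascal := Nat.choose_succ_succ' (p + q + 1) p
      rw [show p + 1 + q = p + q + 1 by ring] at hA
      rw [show p + (q + 1) = p + q + 1 by ring] at hB
      rw [show p + 1 + (q + 1) = p + q + 1 + 1 by ring, hpascal]
      omega

end Ramsey

lemma add_succ_choose_succ_le {p : ℕ} (hp : 2 ≤ p) (q : ℕ) :
    (p + q + 1).choose (q + 1) ≤ (p + 1) * p ^ q := by
  induction q with
  | zero => simp
  | succ q ih =>
    have hstep := Nat.add_one_mul_choose_eq (p + q + 1) (q + 1)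
    have hratio : p + q + 2 ≤ p * (q + 2) := by nlinarith
    have : (p + q + 1 + 1).choose (q + 1 + 1) * (q + 2) ≤ (p + 1) * p ^ (q + 1) * (q + 2) := by
      calc _ = (p + q + 2) * (p + q + 1).choose (q + 1) := by rw [hstep]
        _ ≤ p * (q + 2) * ((p + 1) * p ^ q) := Nat.mul_le_mul hratio ih
        _ = (p + 1) * p ^ (q + 1) * (q + 2) := by ring
    exact Nat.le_of_mul_le_mul_right this (by omega)

lemma add_choose_le_pow {p : ℕ} (hp : 2 ≤ p) (q : ℕ) : (p + q).choose p ≤ p ^ (q + 1) := by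
  rw [Nat.choose_symm_add]
  cases q with
  | zero => rw [Nat.choose_zero_right, pow_one]; omega
  | succ q =>
    calc (p + (q + 1)).choose (q + 1) ≤ (p + 1) * p ^ q := add_succ_choose_succ_le hp q
      _ ≤ p * p * p ^ q := Nat.mul_le_mul_right _ (by nlinarith)
      _ = p ^ (q + 1 + 1) := by ring

section TwinQuotient

variable {G : SimpleGraph V}

lemma twin_out_of_mk_eq {x : V} {a : Quotient (twinSetoid G)}
    (h : Quotient.mk (twinSetoid G) x = a) : twin G x a.out :=
  Quotient.exact (h.trans (Quotient.out_eq a).symm)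

lemma quotGraph_adj_iff {a b : Quotient (twinSetoid G)} :
    (quotGraph G).Adj a b ↔ a ≠ b ∧ G.Adj a.out b.out := by
  refine ⟨fun ⟨hne, x, y, hx, hy, hxy⟩ => ⟨hne, ?_⟩,
    fun ⟨hne, h⟩ => ⟨hne, a.out, b.out, Quotient.out_eq a, Quotient.out_eq b, h⟩⟩
  rcases (twin_out_of_mk_eq hx y).1 (.inl hxy) with hay | rfl
  · rcases (twin_out_of_mk_eq hy a.out).1 (.inl hay.symm) with hba | hba
    · exact hba.symm
    · exact absurd (by rw [← Quotient.out_eq a, ← hba, Quotient.out_eq]) hne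
  · exact absurd (by rw [← hy, Quotient.out_eq]) hne

lemma indepSet_image_out {S : Set (Quotient (twinSetoid G))} (hS : IndepSet (quotGraph G) S) :
    IndepSet G (Quotient.out '' S) := by
  rintro _ ⟨a, ha, rfl⟩ _ ⟨b, hb, rfl⟩ hab
  by_cases hne : a = b
  · subst hne
    exact G.irrefl hab
  · exact hS a ha b hb (quotGraph_adj_iff.2 ⟨hne, hab⟩)

lemma isClique_image_out {C : Set (Quotient (twinSetoid G))} (hC : (quotGraph G).IsClique C) :
    G.IsClique (Quotient.out '' C) := by
  rintro _ ⟨a, ha, rfl⟩ _ ⟨b, hb, rfl⟩ hne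
  exact (quotGraph_adj_iff.1 (hC ha hb fun h => hne (h ▸ rfl))).2

lemma ncard_le_alphaLoc [Finite V] {v : V} {S : Set V} (hS : S ⊆ cNbhd G v)
    (hI : IndepSet G S) : S.ncard ≤ alphaLoc G := by
  refine le_csSup ⟨Nat.card V, ?_⟩ ⟨v, S, hS, hI, rfl⟩
  rintro n ⟨u, T, -, -, rfl⟩
  exact Set.ncard_le_card T

lemma exists_maxClique_superset [Finite V] {C : Set V} (hC : G.IsClique C) :
    ∃ K, MaxClique G K ∧ C ⊆ K := by
  obtain ⟨K, hCK, hK⟩ := Finite.exists_le_maximal hC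
  exact ⟨K, ⟨hK.prop, fun K' hK' hKK' => (hK.2 hK' hKK').antisymm hKK'⟩, hCK⟩

lemma ncard_le_cliqueIncDiv [Finite V] {K : Set V} (hK : MaxClique G K) :
    (qmk G '' K).ncard ≤ cliqueIncDiv G := by
  refine le_csSup ⟨Nat.card (Quotient (twinSetoid G)), ?_⟩ ⟨K, hK, rfl⟩
  rintro n ⟨K', -, rfl⟩
  exact Set.ncard_le_card _

lemma two_le_alphaLoc_of_adj_of_mem_cNbhd [Finite V] {x y z : V} (hxy : G.Adj x y)
    (hz : z ∈ cNbhd G x) (hyz : ¬ (G.Adj y z ∨ y = z)) : 2 ≤ alphaLoc G := by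
  push Not at hyz
  have hpair : IndepSet G {y, z} := by
    refine (indepSet_singleton z).insert ?_
    rintro _ rfl
    exact hyz.1
  rw [← Set.ncard_pair hyz.2]
  exact ncard_le_alphaLoc
    (Set.insert_subset (Set.mem_insert_of_mem _ hxy) (Set.singleton_subset_iff.2 hz)) hpair

lemma two_le_alphaLoc_of_adj_of_not_twin [Finite V] {x y : V} (hxy : G.Adj x y)
    (hn : ¬ twin G x y) : 2 ≤ alphaLoc G := by
  obtain ⟨z, hz⟩ := not_forall.1 hn
  by_cases hxz : G.Adj x z ∨ x = z
  · refine two_le_alphaLoc_of_adj_of_mem_cNbhd hxy ?_ fun hyz => hz (iff_of_true hxz hyz)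
    rcases hxz with h | rfl
    exacts [Set.mem_insert_of_mem _ h, Set.mem_insert _ _]
  · have hyz : G.Adj y z ∨ y = z := by_contra fun hyz => hz (iff_of_false hxz hyz)
    refine two_le_alphaLoc_of_adj_of_mem_cNbhd hxy.symm ?_ hxz
    rcases hyz with h | rfl
    exacts [Set.mem_insert_of_mem _ h, Set.mem_insert _ _]

lemma neighborSet_quotGraph_eq_empty [Finite V] (ha : alphaLoc G ≤ 1)
    (c : Quotient (twinSetoid G)) : (quotGraph G).neighborSet c = ∅ := by
  refine Set.eq_empty_of_forall_notMem fun d hd => ?_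
  obtain ⟨hne, hadj⟩ := quotGraph_adj_iff.1 hd
  have hn : ¬ twin G c.out d.out := fun h =>
    hne (by rw [← Quotient.out_eq c, ← Quotient.out_eq d]; exact Quotient.sound h)
  have := two_le_alphaLoc_of_adj_of_not_twin hadj hn
  omega

lemma ncard_le_alphaLoc_of_subset_neighborSet [Finite V] {c : Quotient (twinSetoid G)}
    {S : Set (Quotient (twinSetoid G))} (hS : S ⊆ (quotGraph G).neighborSet c)
    (hI : IndepSet (quotGraph G) S) : S.ncard ≤ alphaLoc G := by
  rw [← Set.ncard_image_of_injective S Quotient.out_injective]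
  refine ncard_le_alphaLoc (v := c.out) ?_ (indepSet_image_out hI)
  rintro _ ⟨a, ha, rfl⟩
  exact Set.mem_insert_of_mem _ (quotGraph_adj_iff.1 (hS ha)).2

lemma ncard_add_one_le_cliqueIncDiv [Finite V] {c : Quotient (twinSetoid G)}
    {C : Set (Quotient (twinSetoid G))} (hCc : C ⊆ (quotGraph G).neighborSet c)
    (hC : (quotGraph G).IsClique C) : C.ncard + 1 ≤ cliqueIncDiv G := by
  have hcC : (quotGraph G).IsClique (insert c C) := hC.insert fun d hd _ => hCc hd
  obtain ⟨K, hK, hsub⟩ := exists_maxClique_superset (isClique_image_out hcC)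
  have hclasses : insert c C ⊆ qmk G '' K := fun d hd =>
    ⟨d.out, hsub (Set.mem_image_of_mem _ hd), Quotient.out_eq d⟩
  calc C.ncard + 1 = (insert c C).ncard :=
        (Set.ncard_insert_of_notMem (fun hc => (quotGraph G).irrefl (hCc hc))).symm
    _ ≤ (qmk G '' K).ncard := Set.ncard_le_ncard hclasses
    _ ≤ cliqueIncDiv G := ncard_le_cliqueIncDiv hK

end TwinQuotient

theorem stmt10 [Fintype V] (G : SimpleGraph V) :
    maxDeg (quotGraph G) ≤ alphaLoc G ^ cliqueIncDiv G := by
  refine csSup_le' ?_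
  rintro _ ⟨c, rfl⟩
  rcases le_or_gt (alphaLoc G) 1 with ha | ha
  · simp [neighborSet_quotGraph_eq_empty ha c]
  obtain ⟨w, hw⟩ : ∃ w, cliqueIncDiv G = w + 1 := Nat.exists_eq_add_of_le' <| by
    simpa using ncard_add_one_le_cliqueIncDiv (Set.empty_subset ((quotGraph G).neighborSet c))
      (quotGraph G).isClique_empty
  have hramsey := ncard_add_one_le_choose_of_indepSet_of_isClique (q := w)
    ((quotGraph G).neighborSet c).toFinite
    (fun S hS => ncard_le_alphaLoc_of_subset_neighborSet hS)
    (fun C hC hCl => by have := ncard_add_one_le_cliqueIncDiv hC hCl; omega)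
  calc ((quotGraph G).neighborSet c).ncard ≤ (alphaLoc G + w).choose (alphaLoc G) := by omega
    _ ≤ alphaLoc G ^ (w + 1) := add_choose_le_pow ha w
    _ = alphaLoc G ^ cliqueIncDiv G := by rw [hw]
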